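/- arXiv:1401.4730 — 9 statements merged into one kernel-verified Lean document; each statement's English description precedes it below -/
import Mathlib

section
/- In an interpreted system I, let p be an atomic proposition, i an agent, and p', p'' local propositions of agent i. Suppose for every reachable global state s, if the local interpretation of p'' at l_i(s) is true, then p holds at s if and only if the local interpretation of p' at l_i(s) is true. Then for every reachable state s, if p'' is locally true at l_i(s), then (I,s) satisfies K_i p ∨ K_i ¬p. -/
/-- `li` is `l_i`, `Reach` is reachability, `satp s` is `(I, s) ⊨ p`, and `gp'`, `gp''` are the
local interpretations `γ_i(·, p')`, `γ_i(·, p'')`; the two disjuncts unfold `K_i p` and `K_i ¬p`. -/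
theorem local_copy_lemma {S Li : Type} (li : S → Li) (Reach : S → Prop)
    (satp : S → Prop) (gp' gp'' : Li → Bool)
    (hyp : ∀ s, Reach s → gp'' (li s) = true → (satp s ↔ gp' (li s) = true)) :
    ∀ s, Reach s → gp'' (li s) = true →
      ((∀ s', Reach s' → li s' = li s → satp s') ∨
       (∀ s', Reach s' → li s' = li s → ¬ satp s')) := by
  intro s _ hpp
  have hcopy : ∀ s', Reach s' → li s' = li s → (satp s' ↔ gp' (li s) = true) := by
    intro s' hs' hl
    rw [← hl] at hpp ⊢
    exact hyp s' hs' hpp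
  by_cases h : gp' (li s) = true
  · exact .inl fun s' hs' hl => (hcopy s' hs' hl).2 h
  · exact .inr fun s' hs' hl hsat => h ((hcopy s' hs' hl).1 hsat)
end

section
/- If γ_i(l_i(s), p'') = ⊤ and (I,s) ⊨ p, and for all reachable states the condition 'γ_i(l_i(s),p'')=⊤ implies ((I,s)⊨p ↔ γ_i(l_i(s),p')=⊤)' holds, then (I,s) ⊨ K_i p. -/
/-- First half of the local-copy lemma: if `p''` is locally true at `l_i(s)`,
`p` holds at `s`, and for all reachable states the local-copy condition holds,
then `(I,s) ⊨ K_i p`, i.e. `p` holds at every reachable state epistemically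
accessible (same local state of agent `i`) from `s`. -/
theorem local_copy_knows {S Li : Type} (li : S → Li) (Reach : S → Prop)
    (satp : S → Prop) (gp' gp'' : Li → Bool)
    (hyp : ∀ t, Reach t → gp'' (li t) = true → (satp t ↔ gp' (li t) = true))
    (s : S) (hs : Reach s) (h'' : gp'' (li s) = true) (hp : satp s) :
    ∀ s', Reach s' → li s' = li s → satp s' := by
  intro s' hs' hli
  have hcopy : gp' (li s) = true := (hyp s hs h'').mp hp
  rw [← hli] at h'' hcopy
  exact (hyp s' hs' h'').mpr hcopy
end

section
/- Let H be a simulation relation between interpreted systems I and Ĩ over common propositions Φ̃. Then for every ACTLK formula φ over Φ̃ and every (s, s̃) ∈ H, if (Ĩ, s̃) ⊨ φ then (I, s) ⊨ φ. -/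
/-!
Induction on the formula, generalizing over the related pair of states. Atoms transfer
because related states agree on the valuation; `K_i` and `AX` because every epistemic or
temporal successor of `s` is related to one of `s̃`. For `A(φ U ψ)` and `A(φ R ψ)`, every
path from `s` is shadowed, state by state, by a path from `s̃`, on which the universal
path quantifier of the abstract system can be instantiated.
-/

/-- ACTLK formulas in negation normal form:
`p | ¬p | φ∧φ | φ∨φ | K_i φ | AXφ | A(φUφ) | A(φRφ)`. -/
inductive ACTLK (Atom Ag : Type) where
  | pos : Atom → ACTLK Atom Ag
  | neg : Atom → ACTLK Atom Ag
  | conj : ACTLK Atom Ag → ACTLK Atom Ag → ACTLK Atom Ag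
  | disj : ACTLK Atom Ag → ACTLK Atom Ag → ACTLK Atom Ag
  | know : Ag → ACTLK Atom Ag → ACTLK Atom Ag
  | ax : ACTLK Atom Ag → ACTLK Atom Ag
  | au : ACTLK Atom Ag → ACTLK Atom Ag → ACTLK Atom Ag
  | ar : ACTLK Atom Ag → ACTLK Atom Ag → ACTLK Atom Ag

/-- An infinite path of the labelled transition relation `step`. -/
def IsPath {S A : Type} (step : S → A → S → Prop) (π : ℕ → S) : Prop :=
  ∀ n, ∃ a, step (π n) a (π (n + 1))

/-- Satisfaction of ACTLK formulas over a model given by a labelled transition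
relation `step`, epistemic accessibility relations `eps` (which already
incorporate reachability), and an interpretation `val` of atoms. -/
def Sat {S A Ag Atom : Type} (step : S → A → S → Prop)
    (eps : Ag → S → S → Prop) (val : S → Atom → Bool) :
    ACTLK Atom Ag → S → Prop
  | .pos p, s => val s p = true
  | .neg p, s => val s p = false
  | .conj φ ψ, s => Sat step eps val φ s ∧ Sat step eps val ψ s
  | .disj φ ψ, s => Sat step eps val φ s ∨ Sat step eps val ψ s
  | .know i φ, s => ∀ t, eps i s t → Sat step eps val φ t
  | .ax φ, s => ∀ a t, step s a t → Sat step eps val φ t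
  | .au φ ψ, s => ∀ π : ℕ → S, π 0 = s → IsPath step π →
      ∃ i, Sat step eps val ψ (π i) ∧ ∀ j < i, Sat step eps val φ (π j)
  | .ar φ ψ, s => ∀ π : ℕ → S, π 0 = s → IsPath step π →
      ∀ i, (∀ j < i, ¬ Sat step eps val φ (π j)) → Sat step eps val ψ (π i)

/-- A simulation in the sense of the paper, minus its clause on initial states. -/
structure IsSimulation {S S' A A' Ag Atom : Type}
    (step : S → A → S → Prop) (step' : S' → A' → S' → Prop)
    (eps : Ag → S → S → Prop) (eps' : Ag → S' → S' → Prop)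
    (val : S → Atom → Bool) (val' : S' → Atom → Bool) (H : S → S' → Prop) : Prop where
  val_eq : ∀ s s', H s s' → ∀ p, val s p = val' s' p
  step : ∀ s s' a t, H s s' → step s a t → ∃ a' t', step' s' a' t' ∧ H t t'
  eps : ∀ i s s' t, H s s' → eps i s t → ∃ t', eps' i s' t' ∧ H t t'

theorem IsPath.exists_related_path {S S' A A' : Type} {step : S → A → S → Prop}
    {step' : S' → A' → S' → Prop} {H : S → S' → Prop}
    (hstep : ∀ s s' a t, H s s' → step s a t → ∃ a' t', step' s' a' t' ∧ H t t')
    {π : ℕ → S} (hπ : IsPath step π) {s' : S'} (h0 : H (π 0) s') :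
    ∃ π' : ℕ → S', π' 0 = s' ∧ IsPath step' π' ∧ ∀ n, H (π n) (π' n) := by
  have hnext : ∀ n (x : {x // H (π n) x}),
      ∃ y : {y // H (π (n + 1)) y}, ∃ a', step' x a' y := by
    rintro n ⟨x, hx⟩
    obtain ⟨a, ha⟩ := hπ n
    obtain ⟨a', y, hy, hHy⟩ := hstep _ _ _ _ hx ha
    exact ⟨⟨y, hHy⟩, a', hy⟩
  choose next hnext using hnext
  let π' : ∀ n, {x // H (π n) x} := fun n => Nat.rec ⟨s', h0⟩ next n
  exact ⟨fun n => (π' n).1, rfl, fun n => hnext n (π' n), fun n => (π' n).2⟩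

theorem Sat.of_isSimulation {S S' A A' Ag Atom : Type}
    {step : S → A → S → Prop} {step' : S' → A' → S' → Prop}
    {eps : Ag → S → S → Prop} {eps' : Ag → S' → S' → Prop}
    {val : S → Atom → Bool} {val' : S' → Atom → Bool} {H : S → S' → Prop}
    (hsim : IsSimulation step step' eps eps' val val' H) (φ : ACTLK Atom Ag)
    {s : S} {s' : S'} (hH : H s s') (hsat : Sat step' eps' val' φ s') :
    Sat step eps val φ s := by
  induction φ generalizing s s' with
  | pos p => simpa only [Sat, hsim.val_eq s s' hH p] using hsat
  | neg p => simpa only [Sat, hsim.val_eq s s' hH p] using hsat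
  | conj φ ψ ihφ ihψ => exact ⟨ihφ hH hsat.1, ihψ hH hsat.2⟩
  | disj φ ψ ihφ ihψ => exact hsat.imp (ihφ hH) (ihψ hH)
  | know i φ ih =>
    intro t ht
    obtain ⟨t', ht', hHt⟩ := hsim.eps i s s' t hH ht
    exact ih hHt (hsat t' ht')
  | ax φ ih =>
    intro a t hst
    obtain ⟨a', t', hst', hHt⟩ := hsim.step s s' a t hH hst
    exact ih hHt (hsat a' t' hst')
  | au φ ψ ihφ ihψ =>
    intro π hπ0 hπ
    obtain ⟨π', hπ'0, hπ', hHπ⟩ := hπ.exists_related_path hsim.step (hπ0 ▸ hH)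
    obtain ⟨i, hψ, hφ⟩ := hsat π' hπ'0 hπ'
    exact ⟨i, ihψ (hHπ i) hψ, fun j hj => ihφ (hHπ j) (hφ j hj)⟩
  | ar φ ψ ihφ ihψ =>
    intro π hπ0 hπ i hφ
    obtain ⟨π', hπ'0, hπ', hHπ⟩ := hπ.exists_related_path hsim.step (hπ0 ▸ hH)
    exact ihψ (hHπ i) <| hsat π' hπ'0 hπ' i fun j hj hφ' => hφ j hj (ihφ (hHπ j) hφ')

/-- Proposition 1 (core): if `H` is a simulation relation between interpreted
systems `I` and `Ĩ` over the common propositions, then for every ACTLK formula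
`φ` and `(s, s̃) ∈ H`, satisfaction of `φ` at `s̃` in `Ĩ` implies satisfaction
at `s` in `I`. -/
theorem actlk_preserved_by_simulation {S S' A A' Ag Atom : Type}
    (step : S → A → S → Prop) (step' : S' → A' → S' → Prop)
    (eps : Ag → S → S → Prop) (eps' : Ag → S' → S' → Prop)
    (val : S → Atom → Bool) (val' : S' → Atom → Bool)
    (H : S → S' → Prop)
    (hagree : ∀ s s', H s s' → ∀ p, val s p = val' s' p)
    (hstep : ∀ s s' a t, H s s' → step s a t → ∃ a' t', step' s' a' t' ∧ H t t')
    (heps : ∀ i s s' t, H s s' → eps i s t → ∃ t', eps' i s' t' ∧ H t t')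
    (φ : ACTLK Atom Ag) (s : S) (s' : S') (hH : H s s')
    (hsat : Sat step' eps' val' φ s') : Sat step eps val φ s :=
  Sat.of_isSimulation ⟨hagree, hstep, heps⟩ φ hH hsat
end

section
/- If I ⪯ Ĩ (Ĩ simulates I via relation H) and Ĩ ⊨ φ for an ACTLK formula φ over the common propositions, then I ⊨ φ, where M ⊨ φ means φ holds at all initial states of M. -/
section

variable {S S' A A' Ag Atom : Type}

structure IsSimulation_s4 (step : S → A → S → Prop) (step' : S' → A' → S' → Prop)
    (eps : Ag → S → S → Prop) (eps' : Ag → S' → S' → Prop)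
    (val : S → Atom → Bool) (val' : S' → Atom → Bool) (H : S → S' → Prop) : Prop where
  val_eq : ∀ s s', H s s' → ∀ p, val s p = val' s' p
  forth_step : ∀ s s' a t, H s s' → step s a t → ∃ a' t', step' s' a' t' ∧ H t t'
  forth_eps : ∀ i s s' t, H s s' → eps i s t → ∃ t', eps' i s' t' ∧ H t t'

theorem IsPath.exists_simulating_path {step : S → A → S → Prop} {step' : S' → A' → S' → Prop}
    {H : S → S' → Prop}
    (hstep : ∀ s s' a t, H s s' → step s a t → ∃ a' t', step' s' a' t' ∧ H t t')
    {π : ℕ → S} (hπ : IsPath step π) {s' : S'} (h0 : H (π 0) s') :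
    ∃ π' : ℕ → S', π' 0 = s' ∧ IsPath step' π' ∧ ∀ n, H (π n) (π' n) := by
  -- `next` is arbitrary off `H`, so it can be chosen as a plain function
  have hnext : ∀ n (t' : S'), ∃ u', H (π n) t' → H (π (n + 1)) u' ∧ ∃ a', step' t' a' u' := by
    intro n t'
    by_cases ht : H (π n) t'
    · obtain ⟨a, ha⟩ := hπ n
      obtain ⟨a', u', hu', hH⟩ := hstep _ _ _ _ ht ha
      exact ⟨u', fun _ => ⟨hH, a', hu'⟩⟩
    · exact ⟨t', fun h => absurd h ht⟩
  choose next hnext using hnext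
  let π' : ℕ → S' := fun n => Nat.rec s' next n
  have hrel : ∀ n, H (π n) (π' n) := fun n => Nat.rec h0 (fun n ih => (hnext n _ ih).1) n
  exact ⟨π', rfl, fun n => (hnext n _ (hrel n)).2, hrel⟩

theorem IsSimulation_s4.sat_of_sat {step : S → A → S → Prop} {step' : S' → A' → S' → Prop}
    {eps : Ag → S → S → Prop} {eps' : Ag → S' → S' → Prop}
    {val : S → Atom → Bool} {val' : S' → Atom → Bool} {H : S → S' → Prop}
    (hsim : IsSimulation_s4 step step' eps eps' val val' H) (φ : ACTLK Atom Ag) {s : S} {s' : S'}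
    (h : H s s') (hs' : Sat step' eps' val' φ s') : Sat step eps val φ s := by
  induction φ generalizing s s' with
  | pos p => exact (hsim.val_eq s s' h p).trans hs'
  | neg p => exact (hsim.val_eq s s' h p).trans hs'
  | conj φ ψ ihφ ihψ => exact ⟨ihφ h hs'.1, ihψ h hs'.2⟩
  | disj φ ψ ihφ ihψ => exact hs'.imp (ihφ h) (ihψ h)
  | know i φ ih =>
    intro t ht
    obtain ⟨t', ht', hH⟩ := hsim.forth_eps i s s' t h ht
    exact ih hH (hs' t' ht')
  | ax φ ih =>
    intro a t ht
    obtain ⟨a', t', ht', hH⟩ := hsim.forth_step s s' a t h ht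
    exact ih hH (hs' a' t' ht')
  | au φ ψ ihφ ihψ =>
    intro π hπ0 hπ
    obtain ⟨π', hπ'0, hπ', hHπ⟩ := hπ.exists_simulating_path hsim.forth_step (hπ0 ▸ h)
    obtain ⟨i, hψ, hφ⟩ := hs' π' hπ'0 hπ'
    exact ⟨i, ihψ (hHπ i) hψ, fun j hj => ihφ (hHπ j) (hφ j hj)⟩
  | ar φ ψ ihφ ihψ =>
    intro π hπ0 hπ i hi
    obtain ⟨π', hπ'0, hπ', hHπ⟩ := hπ.exists_simulating_path hsim.forth_step (hπ0 ▸ h)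
    exact ihψ (hHπ i) (hs' π' hπ'0 hπ' i fun j hj hφ => hi j hj (ihφ (hHπ j) hφ))

end

/-- Proposition 1: if `I ⪯ Ĩ` via a simulation relation `H` (initial states of
`I` are `H`-related to initial states of `Ĩ`, `H`-related states agree on the
common atomic propositions, and `H` is preserved forward along temporal and
epistemic transitions) and `Ĩ ⊨ φ` for an ACTLK formula `φ`, then `I ⊨ φ`,
where `M ⊨ φ` means `φ` holds at all initial states of `M`. -/
theorem actlk_model_preserved_by_simulation {S S' A A' Ag Atom : Type}
    (step : S → A → S → Prop) (step' : S' → A' → S' → Prop)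
    (eps : Ag → S → S → Prop) (eps' : Ag → S' → S' → Prop)
    (val : S → Atom → Bool) (val' : S' → Atom → Bool)
    (S0 : Set S) (S0' : Set S')
    (H : S → S' → Prop)
    (hinit : ∀ s ∈ S0, ∃ s' ∈ S0', H s s')
    (hagree : ∀ s s', H s s' → ∀ p, val s p = val' s' p)
    (hstep : ∀ s s' a t, H s s' → step s a t → ∃ a' t', step' s' a' t' ∧ H t t')
    (heps : ∀ i s s' t, H s s' → eps i s t → ∃ t', eps' i s' t' ∧ H t t')
    (φ : ACTLK Atom Ag)
    (hsat : ∀ s' ∈ S0', Sat step' eps' val' φ s') :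
    ∀ s ∈ S0, Sat step eps val φ s := by
  intro s hs
  obtain ⟨s', hs', hH⟩ := hinit s hs
  exact IsSimulation_s4.sat_of_sat ⟨hagree, hstep, heps⟩ φ hH (hsat s' hs')
end

section
/- Given a policy C with concrete derived interpreted system I_C and the abstract interpreted system Ĩ_C obtained by hiding propositions Φ∖Φ̃ (local states factored by agreement on visible propositions Φ̃_i, actions grouped into classes with effects restricted to Φ̃ and guards existentially quantified over hidden propositions), the function h mapping each concrete global state s to (h_i(l_i(s)))_{i∈Ω} is a simulation relation between I_C and Ĩ_C; hence I_C ⪯ Ĩ_C. -/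
/-- An instantiated policy action: the agent performing it, its guard
(permission) over global states, and its effect (`some true` for `+p`,
`some false` for `-p`, `none` when `p` does not occur in the effect). -/
structure PAction (Atom Ag : Type) where
  ag : Ag
  guard : (Atom → Bool) → Prop
  eff : Atom → Option Bool

/-- Abstract states: valuations of the visible propositions `Φ̃`. -/
def AState {Atom : Type} (Vis : Set Atom) : Type := {p // p ∈ Vis} → Bool

/-- The abstraction function `h`: restriction of a valuation to visible atoms. -/
def habs {Atom : Type} (Vis : Set Atom) (s : Atom → Bool) : AState Vis :=
  fun p => s p.1

/-- Concrete transition: the guard holds and the state is updated by the effect. -/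
def cstep {Atom Ag Act : Type} (acts : Act → PAction Atom Ag)
    (s : Atom → Bool) (a : Act) (s' : Atom → Bool) : Prop :=
  (acts a).guard s ∧ ∀ p, s' p = ((acts a).eff p).getD (s p)

/-- Abstract transition for the action class `[a]`: the guard is the Boolean
existential quantification `∃(Φ∖Φ̃).ℓ` of the concrete guard over the hidden
propositions, and the effect is restricted to visible propositions. -/
def astep {Atom Ag Act : Type} (Vis : Set Atom) (acts : Act → PAction Atom Ag)
    (t : AState Vis) (a : Act) (t' : AState Vis) : Prop :=
  (∃ s : Atom → Bool, habs Vis s = t ∧ (acts a).guard s) ∧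
    ∀ p : {p // p ∈ Vis}, t' p = ((acts a).eff p.1).getD (t p)

/-- Reachability in the concrete derived interpreted system. -/
inductive CReach {Atom Ag Act : Type} (acts : Act → PAction Atom Ag)
    (S0 : Set (Atom → Bool)) : (Atom → Bool) → Prop
  | base {s} : s ∈ S0 → CReach acts S0 s
  | step {s a s'} : CReach acts S0 s → cstep acts s a s' → CReach acts S0 s'

/-- Reachability in the abstract interpreted system (initial states are the
images of concrete initial states under `h`). -/
inductive AReach {Atom Ag Act : Type} (Vis : Set Atom)
    (acts : Act → PAction Atom Ag) (S0 : Set (Atom → Bool)) : AState Vis → Prop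
  | base {t} : t ∈ habs Vis '' S0 → AReach Vis acts S0 t
  | step {t a t'} : AReach Vis acts S0 t → astep Vis acts t a t' →
      AReach Vis acts S0 t'

/-- Concrete epistemic accessibility of agent `i`: both states reachable and
agreeing on all propositions local to `i` (those owned by `i`). -/
def ceps {Atom Ag Act : Type} (own : Atom → Ag) (acts : Act → PAction Atom Ag)
    (S0 : Set (Atom → Bool)) (i : Ag) (s s' : Atom → Bool) : Prop :=
  CReach acts S0 s ∧ CReach acts S0 s' ∧ ∀ p, own p = i → s p = s' p

/-- Abstract epistemic accessibility of agent `i`. -/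
def aeps {Atom Ag Act : Type} (own : Atom → Ag) (Vis : Set Atom)
    (acts : Act → PAction Atom Ag) (S0 : Set (Atom → Bool)) (i : Ag)
    (t t' : AState Vis) : Prop :=
  AReach Vis acts S0 t ∧ AReach Vis acts S0 t' ∧
    ∀ p : {p // p ∈ Vis}, own p.1 = i → t p = t' p

section

variable {Atom Ag Act : Type} {own : Atom → Ag} {Vis : Set Atom}
  {acts : Act → PAction Atom Ag} {S0 : Set (Atom → Bool)}

-- The concrete source state itself witnesses the abstract guard `∃(Φ∖Φ̃).ℓ`.
theorem astep_habs_of_cstep {s : Atom → Bool} {a : Act} {s' : Atom → Bool}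
    (h : cstep acts s a s') : astep Vis acts (habs Vis s) a (habs Vis s') :=
  ⟨⟨s, rfl, h.1⟩, fun p => h.2 p.1⟩

theorem CReach.areach_habs {s : Atom → Bool} (h : CReach acts S0 s) :
    AReach Vis acts S0 (habs Vis s) := by
  induction h with
  | base hs => exact .base (Set.mem_image_of_mem _ hs)
  | step _ hst ih => exact .step ih (astep_habs_of_cstep hst)

theorem aeps_habs_of_ceps {i : Ag} {s s' : Atom → Bool} (h : ceps own acts S0 i s s') :
    aeps own Vis acts S0 i (habs Vis s) (habs Vis s') :=
  ⟨h.1.areach_habs, h.2.1.areach_habs, fun p => h.2.2 p.1⟩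

end

/-- Proposition 2: for a policy-derived interpreted system `I_C` and its
variable-hiding abstraction `Ĩ_C`, the function `h` mapping each concrete
state to the tuple of its agents' quotient local states is a simulation
relation: (1) initial states map to abstract initial states, (2) `h`-related
states agree on visible propositions, (3) every concrete transition is matched
by an abstract transition of the corresponding abstract action, (4) every
concrete epistemic transition is matched abstractly.  Hence `I_C ⪯ Ĩ_C`. -/
theorem abstraction_is_simulation {Atom Ag Act : Type} (own : Atom → Ag)
    (Vis : Set Atom) (acts : Act → PAction Atom Ag)
    (S0 : Set (Atom → Bool)) :
    (∀ s ∈ S0, habs Vis s ∈ habs Vis '' S0) ∧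
    (∀ (s : Atom → Bool) (p : {p // p ∈ Vis}), s p.1 = habs Vis s p) ∧
    (∀ (s : Atom → Bool) (a : Act) (s' : Atom → Bool),
      cstep acts s a s' → astep Vis acts (habs Vis s) a (habs Vis s')) ∧
    (∀ (i : Ag) (s s' : Atom → Bool), ceps own acts S0 i s s' →
      aeps own Vis acts S0 i (habs Vis s) (habs Vis s')) :=
  ⟨fun _ hs => Set.mem_image_of_mem _ hs, fun _ _ => rfl,
    fun _ _ _ => astep_habs_of_cstep, fun _ _ _ => aeps_habs_of_ceps⟩
end

section
/- Soundness of forward temporal path checking: let π̃ be a temporal path in the abstract model from s̃₁ to s̃ₙ. If st₁ ⊆ h⁻¹(s̃₁) and the sequence of TemporalCheck transitions (π̃, st₁) ⇒*_t (s̃ₙ, stₙ) yields a nonempty set stₙ, then there exists a concrete path starting from a state in st₁ and ending in a state in stₙ. -/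
/-- An edge label of an abstract counterexample path: a temporal transition
labelled by an abstract action, or an epistemic transition labelled by an
agent. -/
inductive Edge (Act' Ag : Type) where
  | temp : Act' → Edge Act' Ag
  | epi : Ag → Edge Act' Ag

/-- The data of a concrete interpreted system together with its abstraction:
concrete states `S` with labelled transitions `step`, local-state projections
`loc`, reachable states `Reach`, initial states `S0`; abstract states `S'`
with transitions `astep`, epistemic relations `aeps`, and abstract initial
states `aS0`; the abstraction function `h` on states and `hA` on actions. -/
structure Frame (S S' Act Act' Ag L : Type) where
  step : S → Act → S → Prop
  loc : Ag → S → L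
  Reach : Set S
  S0 : Set S
  astep : S' → Act' → S' → Prop
  aeps : Ag → S' → S' → Prop
  aS0 : Set S'
  h : S → S'
  hA : Act → Act'

variable {S S' Act Act' Ag L : Type}

/-- One forward transition rule: `TemporalCheck` takes all successors of `st`
under concrete actions mapping to the abstract action, intersected with the
preimage of the target abstract state; `EpistemicCheck` takes the reachable
concrete states in the preimage of the target that share the agent's local
state with some state in `st` (the union-over-all-witness-paths variant, i.e.
the reachable concrete states over the target abstract state). -/
def FwdStep (F : Frame S S' Act Act' Ag L) :
    Edge Act' Ag → S' → Set S → Set S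
  | Edge.temp aa, tgt, st =>
      {t | (∃ s ∈ st, ∃ a, F.hA a = aa ∧ F.step s a t) ∧ F.h t = tgt}
  | Edge.epi ag, tgt, st =>
      {t | t ∈ F.Reach ∧ F.h t = tgt ∧ ∃ s ∈ st, F.loc ag s = F.loc ag t}

/-- The forward traversal `⇒*` along an abstract path, given as the list of
its edges paired with their target abstract states. -/
def Fwd (F : Frame S S' Act Act' Ag L) :
    List (Edge Act' Ag × S') → Set S → Set S
  | [], st => st
  | (e, tgt) :: rest, st => Fwd F rest (FwdStep F e tgt st)

/-- The abstract path starting at `src` with the given edges is a path of the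
abstract model. -/
def AValid (F : Frame S S' Act Act' Ag L) :
    S' → List (Edge Act' Ag × S') → Prop
  | _, [] => True
  | src, (Edge.temp aa, tgt) :: rest => F.astep src aa tgt ∧ AValid F tgt rest
  | src, (Edge.epi ag, tgt) :: rest => F.aeps ag src tgt ∧ AValid F tgt rest

/-- `CPath F s pi t`: there is a concrete path from `s` to `t` corresponding to
the abstract path with edge list `pi`: states map under `h` to the abstract
states, temporal transitions are matched by concrete actions in `h_A⁻¹`, and
epistemic transitions by concrete epistemic relations (equality of the agent's
local states) with reachable targets. -/
inductive CPath (F : Frame S S' Act Act' Ag L) :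
    S → List (Edge Act' Ag × S') → S → Prop
  | nil (s : S) : CPath F s [] s
  | temp {s t u : S} {aa : Act'} {a : Act} {tgt : S'}
      {rest : List (Edge Act' Ag × S')} :
      F.hA a = aa → F.step s a t → F.h t = tgt → CPath F t rest u →
      CPath F s ((Edge.temp aa, tgt) :: rest) u
  | epi {s t u : S} {ag : Ag} {tgt : S'} {rest : List (Edge Act' Ag × S')} :
      t ∈ F.Reach → F.h t = tgt → F.loc ag s = F.loc ag t → CPath F t rest u →
      CPath F s ((Edge.epi ag, tgt) :: rest) u

/-! Every state produced by a forward step has a predecessor in the previous set, reached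
by a concrete transition matching the abstract edge; so walking backwards from any state of the
final set through the intermediate sets of `Fwd` recovers a concrete path. -/

theorem CPath.cons_of_mem_fwdStep {F : Frame S S' Act Act' Ag L} {e : Edge Act' Ag} {tgt : S'}
    {rest : List (Edge Act' Ag × S')} {st : Set S} {s' t : S}
    (hs' : s' ∈ FwdStep F e tgt st) (hpath : CPath F s' rest t) :
    ∃ s ∈ st, CPath F s ((e, tgt) :: rest) t := by
  cases e with
  | temp aa =>
    obtain ⟨⟨s, hs, a, hA, hstep⟩, hh⟩ := hs'
    exact ⟨s, hs, .temp hA hstep hh hpath⟩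
  | epi ag =>
    obtain ⟨hreach, hh, s, hs, hloc⟩ := hs'
    exact ⟨s, hs, .epi hreach hh hloc hpath⟩

theorem exists_cpath_of_mem_fwd {F : Frame S S' Act Act' Ag L} {pi : List (Edge Act' Ag × S')}
    {st : Set S} {t : S} (ht : t ∈ Fwd F pi st) : ∃ s ∈ st, CPath F s pi t := by
  induction pi generalizing st with
  | nil => exact ⟨t, ht, .nil t⟩
  | cons edge rest ih =>
    obtain ⟨s', hs', hpath⟩ := ih ht
    exact hpath.cons_of_mem_fwdStep hs'

theorem fwd_temporal_sound_general (F : Frame S S' Act Act' Ag L)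
    (pi : List (Edge Act' Ag × S'))
    (st1 : Set S)
    (hne : (Fwd F pi st1).Nonempty) :
    ∃ s ∈ st1, ∃ t ∈ Fwd F pi st1, CPath F s pi t := by
  obtain ⟨t, ht⟩ := hne
  obtain ⟨s, hs, hpath⟩ := exists_cpath_of_mem_fwd ht
  exact ⟨s, hs, t, ht, hpath⟩

/-- Proposition 3 (soundness of `⇒*_t`): let `pi` be a temporal path in the
abstract model starting at `src`.  If `st₁ ⊆ h⁻¹(src)` and the forward
temporal traversal of `pi` from `st₁` yields a nonempty set, then there is a
concrete path corresponding to `pi` from a state in `st₁` to a state in the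
resulting set. -/
theorem fwd_temporal_sound (F : Frame S S' Act Act' Ag L) (src : S')
    (pi : List (Edge Act' Ag × S'))
    (hvalid : AValid F src pi)
    (htemp : ∀ e ∈ pi, ∃ aa : Act', e.1 = Edge.temp aa)
    (st1 : Set S) (hsub : ∀ s ∈ st1, F.h s = src)
    (hne : (Fwd F pi st1).Nonempty) :
    ∃ s ∈ st1, ∃ t ∈ Fwd F pi st1, CPath F s pi t :=
  fwd_temporal_sound_general F pi st1 hne
end

section
/- Completeness of forward path checking: let π̃ = s̃₁ → ... → s̃ₙ be a path in the abstract model. If there exists a concrete path π = s₁ → ... → sₙ corresponding to π̃ and s₁ ∈ st₁ ⊆ h⁻¹(s̃₁), then (π̃, st₁) ⇒* (s̃ₙ, stₙ) for some nonempty stₙ; moreover sₙ ∈ stₙ. -/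
variable {S S' Act Act' Ag L : Type}

theorem mem_fwd_of_cPath (F : Frame S S' Act Act' Ag L) {pi : List (Edge Act' Ag × S')}
    {s t : S} {st : Set S} (hs : s ∈ st) (hc : CPath F s pi t) : t ∈ Fwd F pi st := by
  induction hc generalizing st with
  | nil => exact hs
  | temp ha hstep hh _ ih => exact ih ⟨⟨_, hs, _, ha, hstep⟩, hh⟩
  | epi hr hh hl _ ih => exact ih ⟨hr, hh, _, hs, hl⟩

theorem fwd_complete_general (F : Frame S S' Act Act' Ag L)
    (pi : List (Edge Act' Ag × S'))
    (st1 : Set S)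
    (s1 t : S) (hs1 : s1 ∈ st1) (hc : CPath F s1 pi t) :
    t ∈ Fwd F pi st1 ∧ (Fwd F pi st1).Nonempty :=
  have ht := mem_fwd_of_cPath F hs1 hc
  ⟨ht, t, ht⟩

/-- Proposition 5 (completeness of `⇒*`): if the abstract path `pi` from `src`
has a corresponding concrete path from `s₁` to `t`, and `s₁ ∈ st₁ ⊆ h⁻¹(src)`,
then the forward traversal of `pi` from `st₁` yields a nonempty set; moreover
the final concrete state `t` belongs to it. -/
theorem fwd_complete (F : Frame S S' Act Act' Ag L) (src : S')
    (pi : List (Edge Act' Ag × S'))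
    (hvalid : AValid F src pi)
    (st1 : Set S) (hsub : ∀ s ∈ st1, F.h s = src)
    (s1 t : S) (hs1 : s1 ∈ st1) (hc : CPath F s1 pi t) :
    t ∈ Fwd F pi st1 ∧ (Fwd F pi st1).Nonempty :=
  fwd_complete_general F pi st1 s1 t hs1 hc
end

section
/- Completeness of tree-like counterexample checking: if an abstract tree-like counterexample c̃e corresponds to a concrete counterexample ce, then (1) every path of c̃e satisfies (π̃, S₀ ∩ h⁻¹(root)) ⇒* (s̃', st) with st nonempty, and (2) for every vertex s̃ of c̃e, r_{s̃}^{c̃e} ≠ ∅; indeed the concrete state corresponding to s̃ belongs to r_{s̃}^{π̃} for every path π̃ ∈ c̃e. -/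
variable {S S' Act Act' Ag L : Type}

/-- `CTrace F s pi tr`: `tr` is the list of successive concrete states of a
concrete path from `s` corresponding to the abstract edge list `pi`
(one concrete state per abstract edge target). -/
inductive CTrace (F : Frame S S' Act Act' Ag L) :
    S → List (Edge Act' Ag × S') → List S → Prop
  | nil (s : S) : CTrace F s [] []
  | temp {s t : S} {aa : Act'} {a : Act} {tgt : S'}
      {rest : List (Edge Act' Ag × S')} {tr : List S} :
      F.hA a = aa → F.step s a t → F.h t = tgt → CTrace F t rest tr →
      CTrace F s ((Edge.temp aa, tgt) :: rest) (t :: tr)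
  | epi {s t : S} {ag : Ag} {tgt : S'} {rest : List (Edge Act' Ag × S')}
      {tr : List S} :
      t ∈ F.Reach → F.h t = tgt → F.loc ag s = F.loc ag t → CTrace F t rest tr →
      CTrace F s ((Edge.epi ag, tgt) :: rest) (t :: tr)

/-- The vertices of an abstract path with root `root`. -/
def verts (root : S') (pi : List (Edge Act' Ag × S')) : List S' :=
  root :: pi.map Prod.snd

open Classical in
/-- `r_{v}^{pi}`: the set of reachable concrete states in `h⁻¹(v)` lying (at
the position of the vertex `v`) on some concrete path corresponding to the
abstract counterexample path `pi`, starting at a concrete initial state over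
`root`.  For `v` not a vertex of `pi`, it is stipulated to be `h⁻¹(v)`. -/
noncomputable def rset (F : Frame S S' Act Act' Ag L) (root : S')
    (pi : List (Edge Act' Ag × S')) (v : S') : Set S :=
  if v ∈ verts root pi then
    {x | ∃ (s0 : S) (tr : List S), s0 ∈ F.S0 ∧ F.h s0 = root ∧
      CTrace F s0 pi tr ∧
      ∃ i : ℕ, (verts root pi)[i]? = some v ∧ (s0 :: tr)[i]? = some x}
  else F.h ⁻¹' {v}

/-- A vertex of a tree-like counterexample given by a root and a list of
paths. -/
def IsVert (root : S') (paths : List (List (Edge Act' Ag × S'))) (v : S') :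
    Prop :=
  v = root ∨ ∃ pi ∈ paths, v ∈ pi.map Prod.snd

/-! The concrete trace of each path is a witness for everything: forward checking keeps its
successive states, since each rule admits exactly the successors the trace uses, and the chosen
state `σ v` sits on it at the position of `v`. -/

theorem CTrace.fwd_nonempty {F : Frame S S' Act Act' Ag L} {s : S}
    {pi : List (Edge Act' Ag × S')} {tr : List S} (hct : CTrace F s pi tr) {st : Set S}
    (hs : s ∈ st) : (Fwd F pi st).Nonempty := by
  induction hct generalizing st with
  | nil s => exact ⟨s, hs⟩
  | temp hA hstep hh _ ih => exact ih ⟨⟨_, hs, _, hA, hstep⟩, hh⟩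
  | epi hR hh hloc _ ih => exact ih ⟨hR, hh, _, hs, hloc⟩

theorem mem_rset_of_cTrace {F : Frame S S' Act Act' Ag L} {root v : S'} {s0 x : S}
    {pi : List (Edge Act' Ag × S')} {tr : List S} (hs0 : s0 ∈ F.S0) (hroot : F.h s0 = root)
    (hct : CTrace F s0 pi tr)
    (hpos : ∀ i : ℕ, (verts root pi)[i]? = some v → (s0 :: tr)[i]? = some x)
    (hx : F.h x = v) : x ∈ rset F root pi v := by
  unfold rset
  split_ifs with hv
  · obtain ⟨i, hi⟩ := List.mem_iff_getElem?.mp hv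
    exact ⟨s0, tr, hs0, hroot, hct, i, hi, hpos i hi⟩
  · exact hx

theorem counterexample_check_complete_general (F : Frame S S' Act Act' Ag L)
    (root : S')
    (paths : List (List (Edge Act' Ag × S')))
    (σ : S' → S)
    (hσ0 : σ root ∈ F.S0)
    (hσh : ∀ v : S', IsVert root paths v → F.h (σ v) = v)
    (htr : ∀ pi ∈ paths, ∃ tr : List S, CTrace F (σ root) pi tr ∧
      ∀ (i : ℕ) (v : S'), (verts root pi)[i]? = some v →
        (σ root :: tr)[i]? = some (σ v)) :
    (∀ pi ∈ paths, (Fwd F pi (F.S0 ∩ F.h ⁻¹' {root})).Nonempty) ∧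
    (∀ v : S', IsVert root paths v →
      (∀ pi ∈ paths, σ v ∈ rset F root pi v) ∧
      (⋂ pi ∈ paths, rset F root pi v).Nonempty) := by
  have hσroot : F.h (σ root) = root := hσh root (Or.inl rfl)
  have hmem : ∀ v, IsVert root paths v → ∀ pi ∈ paths, σ v ∈ rset F root pi v := by
    intro v hv pi hpi
    obtain ⟨tr, hct, hpos⟩ := htr pi hpi
    exact mem_rset_of_cTrace hσ0 hσroot hct (fun i => hpos i v) (hσh v hv)
  refine ⟨fun pi hpi => ?_, fun v hv => ⟨hmem v hv, σ v, Set.mem_iInter₂.2 (hmem v hv)⟩⟩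
  obtain ⟨tr, hct, -⟩ := htr pi hpi
  exact hct.fwd_nonempty ⟨hσ0, hσroot⟩

/-- Proposition 7 (completeness of tree-like counterexample checking): if the
abstract tree-like counterexample (root `root`, paths `paths`) corresponds to
a concrete counterexample — a choice `σ` of one concrete state per abstract
vertex with `σ root` initial, and for each path a corresponding concrete trace
passing exactly through the chosen states — then (1) every path passes forward
checking from `S₀ ∩ h⁻¹(root)` with a nonempty result, and (2) for every
vertex `v`, `r_v^{ce} ≠ ∅`; indeed `σ v` belongs to `r_v^{pi}` for every path
`pi` of the counterexample. -/
theorem counterexample_check_complete (F : Frame S S' Act Act' Ag L)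
    (root : S') (hroot : root ∈ F.aS0)
    (paths : List (List (Edge Act' Ag × S')))
    (hpaths : ∀ pi ∈ paths, AValid F root pi)
    (σ : S' → S)
    (hσ0 : σ root ∈ F.S0)
    (hσh : ∀ v : S', IsVert root paths v → F.h (σ v) = v)
    (htr : ∀ pi ∈ paths, ∃ tr : List S, CTrace F (σ root) pi tr ∧
      ∀ (i : ℕ) (v : S'), (verts root pi)[i]? = some v →
        (σ root :: tr)[i]? = some (σ v)) :
    (∀ pi ∈ paths, (Fwd F pi (F.S0 ∩ F.h ⁻¹' {root})).Nonempty) ∧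
    (∀ v : S', IsVert root paths v →
      (∀ pi ∈ paths, σ v ∈ rset F root pi v) ∧
      (⋂ pi ∈ paths, rset F root pi v).Nonempty) :=
  counterexample_check_complete_general F root paths σ hσ0 hσh htr
end

section
/- If Ĩ is an abstraction of I via abstraction function h (a functional simulation), the formula φ within a knowledge operator is purely propositional over the visible propositions, and there exists a reachable concrete state s' with s' ∼_a s and (I, s') ⊨ ¬φ, then (I, s) ⊨ ¬K_a φ; moreover (Ĩ, h(s')) ⊨ ¬φ and h(s) ∼_a h(s') in the abstract model whenever h(s), h(s') are reachable, so (Ĩ, h(s)) ⊨ ¬K_a φ. -/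
/-- `K_a φ` at `s`, with agent `a` observing the local state `loc`. -/
def Knows {S L V : Type} (Reach : S → Prop) (loc : S → L) (val : S → V) (φ : V → Prop)
    (s : S) : Prop :=
  ∀ t : S, Reach t → loc t = loc s → φ (val t)

theorem not_knows_of_counterexample {S L V : Type} {Reach : S → Prop} {loc : S → L}
    {val : S → V} {φ : V → Prop} {s t : S} (ht : Reach t) (hacc : loc t = loc s)
    (hnφ : ¬ φ (val t)) : ¬ Knows Reach loc val φ s :=
  fun hK => hnφ (hK t ht hacc)

theorem neg_knowledge_reflected_general {S S' L L' Atom : Type}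
    (Reach : S → Prop) (Reach' : S' → Prop)
    (loc : S → L) (loc' : S' → L')
    (val : S → Atom → Bool) (val' : S' → Atom → Bool)
    (h : S → S')
    (hagree : ∀ (s : S) (p : Atom), val s p = val' (h s) p)
    (hloc : ∀ s t : S, loc s = loc t → loc' (h s) = loc' (h t))
    (φ : (Atom → Bool) → Prop)
    (s s' : S)
    (hs' : Reach s') (hacc : loc s' = loc s)
    (hnφ : ¬ φ (val s')) :
    (¬ ∀ t : S, Reach t → loc t = loc s → φ (val t)) ∧
    (¬ φ (val' (h s'))) ∧
    (Reach' (h s) → Reach' (h s') →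
      loc' (h s) = loc' (h s') ∧
      ¬ ∀ t' : S', Reach' t' → loc' t' = loc' (h s) → φ (val' t')) := by
  have hval : val' (h s') = val s' := funext fun p => (hagree s' p).symm
  have hnφ' : ¬ φ (val' (h s')) := hval ▸ hnφ
  refine ⟨not_knows_of_counterexample hs' hacc hnφ, hnφ', fun _ hs'_abs => ?_⟩
  have hacc' : loc' (h s') = loc' (h s) := hloc s' s hacc
  exact ⟨hacc'.symm, not_knows_of_counterexample hs'_abs hacc' hnφ'⟩

/-- Refuting a knowledge property through a functional abstraction.  Concrete
system: states `S`, reachability `Reach`, local states `loc` of agent `a`,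
interpretation `val` of the visible atoms; abstract system: states `S'`,
`Reach'`, `loc'`, `val'`; `h` is a functional simulation, so `h`-related
states agree on visible propositions (`hagree`) and `h` preserves equality of
agent `a`'s local states (`hloc`).  `φ` is a purely propositional formula over
the visible atoms, evaluated via the atom-valuation of a state; `s ∼_a s'` is
equality of `a`'s local states between reachable states, and `K_a φ` holds at
`s` iff `φ` holds at all reachable states accessible from `s`.

If there is a reachable concrete state `s'` with `s' ∼_a s` and
`(I, s') ⊨ ¬φ`, then `(I, s) ⊨ ¬K_a φ`; moreover `(Ĩ, h(s')) ⊨ ¬φ`, and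
whenever `h(s)` and `h(s')` are reachable in the abstract model,
`h(s) ∼_a h(s')` and `(Ĩ, h(s)) ⊨ ¬K_a φ`. -/
theorem neg_knowledge_reflected {S S' L L' Atom : Type}
    (Reach : S → Prop) (Reach' : S' → Prop)
    (loc : S → L) (loc' : S' → L')
    (val : S → Atom → Bool) (val' : S' → Atom → Bool)
    (h : S → S')
    (hagree : ∀ (s : S) (p : Atom), val s p = val' (h s) p)
    (hloc : ∀ s t : S, loc s = loc t → loc' (h s) = loc' (h t))
    (φ : (Atom → Bool) → Prop)
    (s s' : S)
    (hs : Reach s) (hs' : Reach s') (hacc : loc s' = loc s)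
    (hnφ : ¬ φ (val s')) :
    (¬ ∀ t : S, Reach t → loc t = loc s → φ (val t)) ∧
    (¬ φ (val' (h s'))) ∧
    (Reach' (h s) → Reach' (h s') →
      loc' (h s) = loc' (h s') ∧
      ¬ ∀ t' : S', Reach' t' → loc' t' = loc' (h s) → φ (val' t')) :=
  neg_knowledge_reflected_general Reach Reach' loc loc' val val' h hagree hloc φ s s' hs' hacc hnφ
end
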